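/- If G is a finite simple graph on n ≥ 2 vertices whose Laplacian matrix has a nonzero eigenvalue of multiplicity n − 1, then G is isomorphic to the complete graph Kₙ. -/

import Mathlib

/-!
The Laplacian `L` is singular, since constant vectors lie in its kernel, so its spectrum is `0`
once and `μ` with multiplicity `n - 1`. Hence `L` has rank `n - 1`, so `G` is connected, and
`L² = μ L`. For non-adjacent `u ≠ w` the `(u, w)` entry of `L²` counts the common neighbours of
`u` and `w`, while that of `μ L` vanishes; so adjacency is transitive on distinct vertices, and a
connected graph with this property is complete.
-/

open Polynomial BigOperators SimpleGraph Finset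
open Matrix

/-- The number of spanning trees of a simple graph `G`: the number of subgraphs
(as simple graphs on the same vertex set) contained in `G` that are trees. -/
noncomputable def spanningTreeCount {V : Type*} [Fintype V] (G : SimpleGraph V) : ℕ :=
  Set.ncard {H : SimpleGraph V | H ≤ G ∧ H.IsTree}

lemma Finset.forall_of_card_filter_eq_card_sub_one {ι : Type*} [Fintype ι] [DecidableEq ι]
    {p : ι → Prop} [DecidablePred p] (h : #{i | p i} = Fintype.card ι - 1) {i₀ : ι}
    (hi₀ : ¬ p i₀) (i : ι) (hi : i ≠ i₀) : p i := by
  have hsub : ({i | p i} : Finset ι) ⊆ univ.erase i₀ := fun j hj =>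
    mem_erase.mpr ⟨by rintro rfl; simp_all, mem_univ j⟩
  have heq := eq_of_subset_of_card_le hsub (by rw [card_erase_of_mem (mem_univ _), card_univ, h])
  have : i ∈ ({i | p i} : Finset ι) := heq ▸ mem_erase.mpr ⟨hi, mem_univ i⟩
  simpa using this

namespace Matrix.IsHermitian

variable {𝕜 n : Type*} [RCLike 𝕜] [Fintype n] [DecidableEq n] {A : Matrix n n 𝕜}

lemma rootMultiplicity_charpoly (hA : A.IsHermitian) (μ : ℝ) :
    A.charpoly.rootMultiplicity (μ : 𝕜) = #{i | hA.eigenvalues i = μ} := by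
  rw [← count_roots, hA.roots_charpoly_eq_eigenvalues, Multiset.count_map, card_def,
    filter_val]
  simp [eq_comm]

lemma exists_eigenvalues_eq_zero (hA : A.IsHermitian) (h : A.det = 0) :
    ∃ i, hA.eigenvalues i = 0 := by
  rw [hA.det_eq_prod_eigenvalues, prod_eq_zero_iff] at h
  obtain ⟨i, -, hi⟩ := h
  exact ⟨i, RCLike.ofReal_eq_zero.mp hi⟩

lemma mul_self_eq_smul_of_eigenvalues_mem (hA : A.IsHermitian) {μ : ℝ}
    (h : ∀ i, hA.eigenvalues i = 0 ∨ hA.eigenvalues i = μ) : A * A = (μ : 𝕜) • A := by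
  rw [hA.spectral_theorem, ← map_mul, ← map_smul, diagonal_mul_diagonal, ← diagonal_smul]
  congr 2
  ext i
  rcases h i with h | h <;> simp [h]

lemma card_sub_one_le_rank (hA : A.IsHermitian) {i₀ : n}
    (h : ∀ i, i ≠ i₀ → hA.eigenvalues i ≠ 0) : Fintype.card n - 1 ≤ A.rank := by
  rw [hA.rank_eq_card_non_zero_eigs, ← Set.card_ne_eq i₀]
  exact Fintype.card_subtype_mono _ _ h

end Matrix.IsHermitian

namespace SimpleGraph

variable {V : Type*} (G : SimpleGraph V)

lemma eq_top_of_preconnected_of_adj_trans (hG : G.Preconnected)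
    (h : ∀ u v w, G.Adj u v → G.Adj v w → u ≠ w → G.Adj u w) : G = ⊤ := by
  have adj_of_walk : ∀ u w, G.Walk u w → u = w ∨ G.Adj u w := by
    intro u w p
    induction p with
    | nil => exact .inl rfl
    | @cons u v w huv _ ih =>
      rcases ih with rfl | hvw
      · exact .inr huv
      · by_cases huw : u = w
        · exact .inl huw
        · exact .inr (h u v w huv hvw huw)
  ext u w
  refine ⟨G.ne_of_adj, fun huw => ?_⟩
  obtain ⟨p⟩ := hG u w
  exact (adj_of_walk u w p).resolve_left huw

variable [Fintype V] [DecidableEq V] [DecidableRel G.Adj]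

lemma lapMatrix_mul_self_apply_of_not_adj {R : Type*} [Ring R] {i j : V} (hij : i ≠ j)
    (h : ¬ G.Adj i j) :
    (G.lapMatrix R * G.lapMatrix R) i j = #(G.neighborFinset i ∩ G.neighborFinset j) := by
  rw [inter_comm, ← filter_mem_eq_inter]
  simp [lapMatrix, degMatrix, sub_mul, mul_sub, diagonal_apply, hij, h, G.adj_comm j i]

lemma adj_trans_of_lapMatrix_mul_self_eq_smul {R : Type*} [Ring R] [CharZero R] {μ : R}
    (hL : G.lapMatrix R * G.lapMatrix R = μ • G.lapMatrix R) {u v w : V}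
    (huv : G.Adj u v) (hvw : G.Adj v w) (huw : u ≠ w) : G.Adj u w := by
  by_contra h
  have hcommon := G.lapMatrix_mul_self_apply_of_not_adj (R := R) huw h
  rw [hL] at hcommon
  have hv : v ∈ G.neighborFinset u ∩ G.neighborFinset w := by simp [huv, hvw.symm]
  have : (0 : R) = #(G.neighborFinset u ∩ G.neighborFinset w) := by
    simpa [lapMatrix, degMatrix, huw, h] using hcommon
  exact (card_pos.mpr ⟨v, hv⟩).ne (by exact_mod_cast this)

lemma preconnected_of_card_sub_one_le_rank_lapMatrix
    (h : Fintype.card V - 1 ≤ (G.lapMatrix ℝ).rank) : G.Preconnected := by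
  have hrank := LinearMap.finrank_range_add_finrank_ker (G.lapMatrix ℝ).mulVecLin
  rw [Module.finrank_fintype_fun_eq_card] at hrank
  have : Fintype.card G.ConnectedComponent ≤ 1 := by
    rw [card_connectedComponent_eq_finrank_ker_toLin'_lapMatrix, toLin'_apply']
    rw [Matrix.rank] at h
    omega
  have := Fintype.card_le_one_iff_subsingleton.mp this
  exact fun u v => ConnectedComponent.exact (Subsingleton.elim _ _)

end SimpleGraph

/-- A graph whose Laplacian has a nonzero eigenvalue of algebraic multiplicity n-1
is complete. -/
theorem stmt_10 {V : Type*} [Fintype V] [DecidableEq V] (G : SimpleGraph V)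
    [DecidableRel G.Adj] (n : ℕ) (hn : 2 ≤ n) (hcard : Fintype.card V = n)
    (mu : ℝ) (hmu : mu ≠ 0)
    (hmult : (G.lapMatrix ℝ).charpoly.rootMultiplicity mu = n - 1) :
    Nonempty (G ≃g (⊤ : SimpleGraph (Fin n))) := by
  have : Nonempty V := Fintype.card_pos_iff.mp (by omega)
  have hL := G.isHermitian_lapMatrix ℝ
  obtain ⟨i₀, hi₀⟩ := hL.exists_eigenvalues_eq_zero G.det_lapMatrix_eq_zero
  have hcount : #{i | hL.eigenvalues i = mu} = Fintype.card V - 1 := by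
    rw [← hL.rootMultiplicity_charpoly, hcard]
    exact hmult
  have hev := forall_of_card_filter_eq_card_sub_one hcount (hi₀ ▸ hmu.symm)
  have hsq : G.lapMatrix ℝ * G.lapMatrix ℝ = mu • G.lapMatrix ℝ :=
    hL.mul_self_eq_smul_of_eigenvalues_mem fun i => by
      rcases eq_or_ne i i₀ with rfl | hi
      exacts [.inl hi₀, .inr (hev i hi)]
  have hconn := G.preconnected_of_card_sub_one_le_rank_lapMatrix
    (hL.card_sub_one_le_rank fun i hi => hev i hi ▸ hmu)
  obtain rfl := G.eq_top_of_preconnected_of_adj_trans hconn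
    fun _ _ _ => G.adj_trans_of_lapMatrix_mul_self_eq_smul hsq
  exact ⟨Iso.completeGraph (Fintype.equivFinOfCardEq hcard)⟩
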